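/- The function ψ is infinite harmonic away from the singularity: at every point of ℝ^{2n+1} ∖ {x₀} where Σ ≠ 0, Δ_∞ ψ = Σ_{i,j=1}^{2n} X_i ψ · X_j ψ · X_i X_j ψ = 0. -/

import Mathlib

open MeasureTheory Real Filter

noncomputable section

/-- Points of `ℝ^{2n+1}`: the `2n` horizontal coordinates indexed by `Fin n ⊕ Fin n`
(`Sum.inl i` encodes the coordinate `x_i` for `1 ≤ i ≤ n`, and `Sum.inr i` encodes the
coordinate `x_{i+n}`), together with the vertical coordinate `t`. -/
abbrev Pt (n : ℕ) := ((Fin n ⊕ Fin n) → ℝ) × ℝ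

/-- `Σ(x) = ∑_{l=1}^{2n} (x_l - a_l)²`. -/
def Sg (n : ℕ) (a : Fin n ⊕ Fin n → ℝ) (x : Pt n) : ℝ :=
  ∑ l : Fin n ⊕ Fin n, (x.1 l - a l) ^ 2

/-- Partial derivative `∂u/∂x_l` in the `l`-th horizontal coordinate direction. -/
def pdx (n : ℕ) (l : Fin n ⊕ Fin n) (u : Pt n → ℝ) (x : Pt n) : ℝ :=
  fderiv ℝ u x (Pi.single l 1, 0)

/-- Partial derivative `∂u/∂t` in the vertical direction. -/
def pdt (n : ℕ) (u : Pt n → ℝ) (x : Pt n) : ℝ :=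
  fderiv ℝ u x (0, 1)

/-- The Hörmander vector fields:
`X_i u = ∂u/∂x_i + 2kc (x_{i+n} - a_{i+n}) Σ^{k-1} ∂u/∂t` for `1 ≤ i ≤ n`, and
`X_j u = ∂u/∂x_j - 2kc (x_{j-n} - a_{j-n}) Σ^{k-1} ∂u/∂t` for `n+1 ≤ j ≤ 2n`. -/
def X (n : ℕ) (k c : ℝ) (a : Fin n ⊕ Fin n → ℝ) (l : Fin n ⊕ Fin n)
    (u : Pt n → ℝ) (x : Pt n) : ℝ :=
  match l with
  | Sum.inl i => pdx n (Sum.inl i) u x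
      + 2 * k * c * (x.1 (Sum.inr i) - a (Sum.inr i)) * Sg n a x ^ (k - 1) * pdt n u x
  | Sum.inr j => pdx n (Sum.inr j) u x
      - 2 * k * c * (x.1 (Sum.inl j) - a (Sum.inl j)) * Sg n a x ^ (k - 1) * pdt n u x

/-- Norm of the horizontal gradient `∇₀u = (X₁u, …, X_{2n}u)`. -/
def hnorm (n : ℕ) (k c : ℝ) (a : Fin n ⊕ Fin n → ℝ) (u : Pt n → ℝ) (x : Pt n) : ℝ :=
  Real.sqrt (∑ l : Fin n ⊕ Fin n, (X n k c a l u x) ^ 2)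

/-- The `p`-Laplacian `Δ_p u = ∑_{l=1}^{2n} X_l (‖∇₀u‖^{p-2} X_l u)`. -/
def pLap (n : ℕ) (k c : ℝ) (a : Fin n ⊕ Fin n → ℝ) (p : ℝ) (u : Pt n → ℝ) (x : Pt n) : ℝ :=
  ∑ l : Fin n ⊕ Fin n,
    X n k c a l (fun y => hnorm n k c a u y ^ (p - 2) * X n k c a l u y) x

/-- `h(x) = c² Σ(x)^{2k} + (t-s)²`. -/
def hfun (n : ℕ) (k c : ℝ) (a : Fin n ⊕ Fin n → ℝ) (s : ℝ) (x : Pt n) : ℝ :=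
  c ^ 2 * Sg n a x ^ (2 * k) + (x.2 - s) ^ 2

/-- `ψ = h^{1/(4k)}`. -/
def psi (n : ℕ) (k c : ℝ) (a : Fin n ⊕ Fin n → ℝ) (s : ℝ) (x : Pt n) : ℝ :=
  hfun n k c a s x ^ (1 / (4 * k))

/-! The infinite Laplacian is half the horizontal derivative of the squared horizontal gradient
along the gradient: `Δ_∞ u = ½ ⟨∇₀u, ∇₀|∇₀u|²⟩`. The horizontal gradients of `Σ` and of `t - s`
are orthogonal, with `|∇₀Σ|² = 4Σ` and `|∇₀(t - s)|² = 4k²c²Σ^{2k-1}`. Hence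
`⟨∇₀h, ∇₀Σ⟩ = 8kc²Σ^{2k}` and `|∇₀h|² = 16k²c²Σ^{2k-1} h`, so that
`|∇₀ψ|² = c²Σ^{2k-1} h^{1/(2k)-1}`. Differentiating this once more along `∇₀h`, the two resulting
terms cancel because `8k(2k-1) + 16k²(1/(2k) - 1) = 0`. -/

open Finset Topology

section HorizontalCalculus

variable {n : ℕ} {k c : ℝ} {a : Fin n ⊕ Fin n → ℝ} {l : Fin n ⊕ Fin n} {u v w f g : Pt n → ℝ}
  {y : Pt n}

def vertCoeff (n : ℕ) (k c : ℝ) (a : Fin n ⊕ Fin n → ℝ) (l : Fin n ⊕ Fin n) (y : Pt n) : ℝ :=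
  match l with
  | Sum.inl i => 2 * k * c * (y.1 (Sum.inr i) - a (Sum.inr i)) * Sg n a y ^ (k - 1)
  | Sum.inr j => -(2 * k * c * (y.1 (Sum.inl j) - a (Sum.inl j)) * Sg n a y ^ (k - 1))

def hdir (n : ℕ) (k c : ℝ) (a : Fin n ⊕ Fin n → ℝ) (l : Fin n ⊕ Fin n) (y : Pt n) : Pt n :=
  (Pi.single l 1, vertCoeff n k c a l y)

theorem X_eq_fderiv (l : Fin n ⊕ Fin n) (u : Pt n → ℝ) (y : Pt n) :
    X n k c a l u y = fderiv ℝ u y (hdir n k c a l y) := by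
  have hdir_eq : hdir n k c a l y
      = (Pi.single l 1, 0) + vertCoeff n k c a l y • ((0 : Fin n ⊕ Fin n → ℝ), (1 : ℝ)) := by
    ext <;> simp [hdir]
  rw [hdir_eq, map_add, map_smul]
  cases l <;> simp only [X, pdx, pdt, vertCoeff, smul_eq_mul, neg_mul, sub_eq_add_neg]

theorem X_congr (h : u =ᶠ[𝓝 y] v) : X n k c a l u y = X n k c a l v y := by
  simp only [X_eq_fderiv, h.fderiv_eq]

theorem X_add (hf : DifferentiableAt ℝ f y) (hg : DifferentiableAt ℝ g y) :
    X n k c a l (fun z => f z + g z) y = X n k c a l f y + X n k c a l g y := by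
  simp [X_eq_fderiv, fderiv_fun_add hf hg]

theorem X_sub_const (r : ℝ) : X n k c a l (fun z => f z - r) y = X n k c a l f y := by
  simp [X_eq_fderiv, fderiv_sub_const]

theorem X_const_mul (hf : DifferentiableAt ℝ f y) (r : ℝ) :
    X n k c a l (fun z => r * f z) y = r * X n k c a l f y := by
  simp [X_eq_fderiv, fderiv_const_mul hf]

theorem X_mul (hf : DifferentiableAt ℝ f y) (hg : DifferentiableAt ℝ g y) :
    X n k c a l (fun z => f z * g z) y = f y * X n k c a l g y + g y * X n k c a l f y := by
  simp [X_eq_fderiv, fderiv_fun_mul hf hg]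

theorem X_pow (hf : DifferentiableAt ℝ f y) (m : ℕ) :
    X n k c a l (fun z => f z ^ m) y = m * f y ^ (m - 1) * X n k c a l f y := by
  simp [X_eq_fderiv, fderiv_fun_pow m hf, mul_assoc]

theorem X_rpow_const (hf : DifferentiableAt ℝ f y) (hy : f y ≠ 0) (e : ℝ) :
    X n k c a l (fun z => f z ^ e) y = e * f y ^ (e - 1) * X n k c a l f y := by
  simp [X_eq_fderiv, (hf.hasFDerivAt.rpow_const (Or.inl hy)).fderiv, mul_assoc]

theorem X_sum {ι : Type*} (t : Finset ι) {F : ι → Pt n → ℝ}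
    (hF : ∀ i ∈ t, DifferentiableAt ℝ (F i) y) :
    X n k c a l (fun z => ∑ i ∈ t, F i z) y = ∑ i ∈ t, X n k c a l (F i) y := by
  simp [X_eq_fderiv, fderiv_fun_sum hF]

theorem contDiff_Sg : ContDiff ℝ 2 (Sg n a) := by
  unfold Sg; fun_prop

theorem differentiableAt_Sg (y : Pt n) : DifferentiableAt ℝ (Sg n a) y :=
  contDiff_Sg.differentiable two_ne_zero y

theorem differentiableAt_hdir (hy : Sg n a y ≠ 0) :
    DifferentiableAt ℝ (hdir n k c a l) y := by
  have hSg : DifferentiableAt ℝ (fun z => Sg n a z ^ (k - 1)) y :=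
    (differentiableAt_Sg y).rpow_const (Or.inl hy)
  refine (differentiableAt_const (Pi.single l 1)).prodMk ?_
  cases l <;> unfold vertCoeff <;> fun_prop

theorem differentiableAt_X (hu : ContDiffAt ℝ 2 u y) (hy : Sg n a y ≠ 0) :
    DifferentiableAt ℝ (X n k c a l u) y := by
  rw [show X n k c a l u = fun z => fderiv ℝ u z (hdir n k c a l z) from
    funext (X_eq_fderiv l u)]
  exact ((hu.fderiv_right (m := 1) le_rfl).differentiableAt one_ne_zero).clm_apply
    (differentiableAt_hdir hy)

theorem X_coord (l m : Fin n ⊕ Fin n) (y : Pt n) :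
    X n k c a l (fun z => z.1 m) y = Pi.single (M := fun _ => ℝ) l 1 m := by
  have h : HasFDerivAt (fun z : Pt n => z.1 m) _ y :=
    (hasFDerivAt_apply (𝕜 := ℝ) m y.1).comp y hasFDerivAt_fst
  rw [X_eq_fderiv, h.fderiv]
  rfl

theorem X_snd_sub (l : Fin n ⊕ Fin n) (s : ℝ) (y : Pt n) :
    X n k c a l (fun z => z.2 - s) y = vertCoeff n k c a l y := by
  rw [X_eq_fderiv, (hasFDerivAt_snd.sub_const s).fderiv]
  rfl

theorem X_Sg (l : Fin n ⊕ Fin n) (y : Pt n) : X n k c a l (Sg n a) y = 2 * (y.1 l - a l) := by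
  have hd : ∀ m, DifferentiableAt ℝ (fun z : Pt n => z.1 m - a m) y := fun m => by fun_prop
  unfold Sg
  rw [X_sum _ fun m _ => (hd m).fun_pow 2]
  simp [X_pow (hd _), X_sub_const, X_coord, Pi.single_apply]

/-- The horizontal inner product `⟨∇₀u, ∇₀v⟩`. -/
def hInner (n : ℕ) (k c : ℝ) (a : Fin n ⊕ Fin n → ℝ) (u v : Pt n → ℝ) (y : Pt n) : ℝ :=
  ∑ l, X n k c a l u y * X n k c a l v y

theorem hInner_comm (u v : Pt n → ℝ) (y : Pt n) :
    hInner n k c a u v y = hInner n k c a v u y := by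
  simp only [hInner, mul_comm]

theorem hInner_congr_right (h : v =ᶠ[𝓝 y] w) : hInner n k c a u v y = hInner n k c a u w y := by
  simp only [hInner, X_congr h]

theorem hInner_eq_of_X_eq_mul {α : ℝ} (h : ∀ l, X n k c a l f y = α * X n k c a l u y)
    (w : Pt n → ℝ) : hInner n k c a f w y = α * hInner n k c a u w y := by
  simp only [hInner, h, mul_sum, mul_assoc]

theorem hInner_eq_of_X_eq_add {α β : ℝ}
    (h : ∀ l, X n k c a l f y = α * X n k c a l u y + β * X n k c a l v y) (w : Pt n → ℝ) :
    hInner n k c a f w y = α * hInner n k c a u w y + β * hInner n k c a v w y := by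
  simp only [hInner, h, add_mul, sum_add_distrib, mul_sum, mul_assoc]

theorem sum_sum_X_mul_X_mul_X_X (hu : ∀ j, DifferentiableAt ℝ (X n k c a j u) y) :
    ∑ i, ∑ j, X n k c a i u y * X n k c a j u y * X n k c a i (X n k c a j u) y
      = hInner n k c a u (hInner n k c a u u) y / 2 := by
  have X_hInner_self : ∀ i, X n k c a i (hInner n k c a u u) y
      = ∑ j, 2 * X n k c a j u y * X n k c a i (X n k c a j u) y := fun i => by
    rw [show hInner n k c a u u = fun z => ∑ j, X n k c a j u z * X n k c a j u z from rfl,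
      X_sum _ fun j _ => (hu j).fun_mul (hu j)]
    simp only [X_mul (hu _) (hu _)]
    congr! 1 with j; ring
  simp only [hInner, X_hInner_self, mul_sum, sum_div]
  congr! 2 with i - j; ring

theorem hInner_Sg_Sg (y : Pt n) : hInner n k c a (Sg n a) (Sg n a) y = 4 * Sg n a y := by
  simp only [hInner, X_Sg, Sg, mul_sum]
  congr! 1 with l; ring

theorem hInner_Sg_snd_sub (s : ℝ) (y : Pt n) :
    hInner n k c a (Sg n a) (fun z => z.2 - s) y = 0 := by
  simp only [hInner, X_Sg, X_snd_sub, Fintype.sum_sum_type, vertCoeff, ← sum_add_distrib]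
  exact sum_eq_zero fun i _ => by ring

theorem hInner_snd_sub_snd_sub (s : ℝ) (hy : 0 < Sg n a y) :
    hInner n k c a (fun z => z.2 - s) (fun z => z.2 - s) y
      = 4 * k ^ 2 * c ^ 2 * Sg n a y ^ (2 * k - 1) := by
  have hpow : Sg n a y ^ (2 * k - 1) = Sg n a y ^ (k - 1) * Sg n a y ^ (k - 1) * Sg n a y := by
    rw [← rpow_add hy, ← rpow_add_one hy.ne']; ring_nf
  rw [hpow]
  nth_rewrite 3 [Sg]
  simp only [hInner, X_snd_sub, Fintype.sum_sum_type, vertCoeff, mul_sum, ← sum_add_distrib]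
  congr! 1 with i; ring

end HorizontalCalculus

section Psi

variable {n : ℕ} {k c s : ℝ} {a : Fin n ⊕ Fin n → ℝ} {y : Pt n}

theorem Sg_nonneg (y : Pt n) : 0 ≤ Sg n a y :=
  sum_nonneg fun _ _ => sq_nonneg _

theorem hfun_pos (hc : c ≠ 0) (hy : 0 < Sg n a y) : 0 < hfun n k c a s y := by
  unfold hfun; positivity

theorem contDiffAt_hfun (hy : 0 < Sg n a y) : ContDiffAt ℝ 2 (hfun n k c a s) y := by
  unfold hfun
  have hSk := contDiff_Sg.contDiffAt.rpow_const_of_ne (p := 2 * k) hy.ne'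
  fun_prop

theorem contDiffAt_psi (hc : c ≠ 0) (hy : 0 < Sg n a y) : ContDiffAt ℝ 2 (psi n k c a s) y :=
  (contDiffAt_hfun hy).rpow_const_of_ne (hfun_pos hc hy).ne'

theorem X_hfun (hy : 0 < Sg n a y) (l : Fin n ⊕ Fin n) :
    X n k c a l (hfun n k c a s) y
      = 2 * k * c ^ 2 * Sg n a y ^ (2 * k - 1) * X n k c a l (Sg n a) y
        + 2 * (y.2 - s) * X n k c a l (fun z => z.2 - s) y := by
  have hS := differentiableAt_Sg (a := a) y
  have hSk : DifferentiableAt ℝ (fun z => Sg n a z ^ (2 * k)) y := hS.rpow_const (Or.inl hy.ne')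
  have ht : DifferentiableAt ℝ (fun z : Pt n => z.2 - s) y := by fun_prop
  unfold hfun
  rw [X_add (hSk.const_mul _) (ht.fun_pow 2), X_const_mul hSk, X_rpow_const hS hy.ne', X_pow ht]
  push_cast; ring

theorem hInner_hfun (hy : 0 < Sg n a y) (w : Pt n → ℝ) :
    hInner n k c a (hfun n k c a s) w y
      = 2 * k * c ^ 2 * Sg n a y ^ (2 * k - 1) * hInner n k c a (Sg n a) w y
        + 2 * (y.2 - s) * hInner n k c a (fun z => z.2 - s) w y :=
  hInner_eq_of_X_eq_add (X_hfun hy) w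

theorem hInner_hfun_Sg (hy : 0 < Sg n a y) :
    hInner n k c a (hfun n k c a s) (Sg n a) y = 8 * k * c ^ 2 * Sg n a y ^ (2 * k) := by
  rw [hInner_hfun hy, hInner_Sg_Sg, hInner_comm _ (Sg n a), hInner_Sg_snd_sub,
    rpow_sub_one hy.ne']
  field_simp; ring

theorem hInner_hfun_hfun (hy : 0 < Sg n a y) :
    hInner n k c a (hfun n k c a s) (hfun n k c a s) y
      = 16 * k ^ 2 * c ^ 2 * Sg n a y ^ (2 * k - 1) * hfun n k c a s y := by
  rw [hInner_hfun hy, hInner_comm (Sg n a), hInner_hfun_Sg hy, hInner_comm _ (hfun n k c a s),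
    hInner_hfun hy, hInner_Sg_snd_sub, hInner_snd_sub_snd_sub s hy, hfun]
  ring

theorem hInner_psi (hc : c ≠ 0) (hy : 0 < Sg n a y) (w : Pt n → ℝ) :
    hInner n k c a (psi n k c a s) w y
      = 1 / (4 * k) * hfun n k c a s y ^ (1 / (4 * k) - 1)
        * hInner n k c a (hfun n k c a s) w y :=
  hInner_eq_of_X_eq_mul
    (fun _ => X_rpow_const ((contDiffAt_hfun hy).differentiableAt two_ne_zero)
      (hfun_pos hc hy).ne' _) w

def gradPsiSq (n : ℕ) (k c : ℝ) (a : Fin n ⊕ Fin n → ℝ) (s : ℝ) (y : Pt n) : ℝ :=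
  c ^ 2 * Sg n a y ^ (2 * k - 1) * hfun n k c a s y ^ (1 / (2 * k) - 1)

theorem hInner_psi_psi (hk : k ≠ 0) (hc : c ≠ 0) (hy : 0 < Sg n a y) :
    hInner n k c a (psi n k c a s) (psi n k c a s) y = gradPsiSq n k c a s y := by
  have hh := hfun_pos (k := k) (s := s) hc hy
  have hpow : hfun n k c a s y ^ (1 / (2 * k) - 1)
      = hfun n k c a s y ^ (1 / (4 * k) - 1) * hfun n k c a s y ^ (1 / (4 * k) - 1)
        * hfun n k c a s y := by
    rw [← rpow_add hh, ← rpow_add_one hh.ne']; ring_nf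
  rw [hInner_psi hc hy, hInner_comm, hInner_psi hc hy, hInner_hfun_hfun hy, gradPsiSq, hpow]
  field_simp; ring

theorem hInner_psi_psi_eventuallyEq (hk : k ≠ 0) (hc : c ≠ 0) {x : Pt n} (hx : 0 < Sg n a x) :
    hInner n k c a (psi n k c a s) (psi n k c a s) =ᶠ[𝓝 x] gradPsiSq n k c a s := by
  filter_upwards [continuousAt_const.eventually_lt (differentiableAt_Sg x).continuousAt hx]
    with y hy using hInner_psi_psi hk hc hy

theorem X_gradPsiSq (hc : c ≠ 0) (hy : 0 < Sg n a y) (l : Fin n ⊕ Fin n) :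
    X n k c a l (gradPsiSq n k c a s) y
      = c ^ 2 * (2 * k - 1) * Sg n a y ^ (2 * k - 1 - 1) * hfun n k c a s y ^ (1 / (2 * k) - 1)
          * X n k c a l (Sg n a) y
        + c ^ 2 * Sg n a y ^ (2 * k - 1) * (1 / (2 * k) - 1)
          * hfun n k c a s y ^ (1 / (2 * k) - 1 - 1) * X n k c a l (hfun n k c a s) y := by
  have hS := differentiableAt_Sg (a := a) y
  have hh := (contDiffAt_hfun (k := k) (c := c) (s := s) hy).differentiableAt two_ne_zero
  have hSe : DifferentiableAt ℝ (fun z => Sg n a z ^ (2 * k - 1)) y :=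
    hS.rpow_const (Or.inl hy.ne')
  have hhe : DifferentiableAt ℝ (fun z => hfun n k c a s z ^ (1 / (2 * k) - 1)) y :=
    hh.rpow_const (Or.inl (hfun_pos hc hy).ne')
  unfold gradPsiSq
  rw [X_mul (hSe.const_mul _) hhe, X_const_mul hSe, X_rpow_const hS hy.ne',
    X_rpow_const hh (hfun_pos hc hy).ne']
  ring

theorem hInner_hfun_gradPsiSq (hk : k ≠ 0) (hc : c ≠ 0) (hy : 0 < Sg n a y) :
    hInner n k c a (hfun n k c a s) (gradPsiSq n k c a s) y = 0 := by
  have hh := hfun_pos (k := k) (s := s) hc hy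
  rw [hInner_comm, hInner_eq_of_X_eq_add (X_gradPsiSq hc hy), hInner_comm (Sg n a),
    hInner_hfun_Sg hy, hInner_hfun_hfun hy, rpow_sub_one hy.ne' (2 * k - 1),
    rpow_sub_one hy.ne' (2 * k), rpow_sub_one hh.ne' (1 / (2 * k) - 1)]
  field_simp; ring

end Psi

theorem stmt13_general (n : ℕ) (a : Fin n ⊕ Fin n → ℝ) (s : ℝ)
    (c k : ℝ) (hc : c ≠ 0) (hk : 0 < k)
    (x : Pt n) (hx : Sg n a x ≠ 0) :
    ∑ i : Fin n ⊕ Fin n, ∑ j : Fin n ⊕ Fin n,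
      X n k c a i (psi n k c a s) x * X n k c a j (psi n k c a s) x *
        X n k c a i (X n k c a j (psi n k c a s)) x = 0 := by
  have hx' : 0 < Sg n a x := (Sg_nonneg x).lt_of_ne' hx
  rw [sum_sum_X_mul_X_mul_X_X fun j => differentiableAt_X (contDiffAt_psi hc hx') hx,
    hInner_congr_right (hInner_psi_psi_eventuallyEq hk.ne' hc hx'), hInner_psi hc hx',
    hInner_hfun_gradPsiSq hk.ne' hc hx']
  simp

theorem stmt13 (n : ℕ) (hn : 1 ≤ n) (a : Fin n ⊕ Fin n → ℝ) (s : ℝ)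
    (c k : ℝ) (hc : c ≠ 0) (hk : 0 < k)
    (x : Pt n) (hx0 : x ≠ (a, s)) (hx : Sg n a x ≠ 0) :
    ∑ i : Fin n ⊕ Fin n, ∑ j : Fin n ⊕ Fin n,
      X n k c a i (psi n k c a s) x * X n k c a j (psi n k c a s) x *
        X n k c a i (X n k c a j (psi n k c a s)) x = 0 :=
  stmt13_general n a s c k hc hk x hx
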